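/- arXiv:2210.05537 — 4 statements merged into one kernel-verified Lean document; each statement's English description precedes it below -/
import Mathlib

section
/- Let σ_n be a uniform random 231-avoiding permutation of size n, decomposed uniquely as σ_n = τ_n ⊕ (1 ⊖ π_n) with τ_n, π_n ∈ Av(231). Then for every fixed 231-avoiding permutation ρ, lim_{n→∞} P(τ_n = ρ) = lim_{n→∞} P(π_n = ρ) = 4^{-|ρ|-1}, where |ρ| is the size of ρ. -/
open FirstOrder Filter Asymptotics Topology

namespace Av231

/-- Relation symbols of the theory of two orders: two binary relations `<_P` and `<_V`. -/
inductive TwoRel : ℕ → Type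
  | lp : TwoRel 2
  | lv : TwoRel 2

/-- The first-order language with two binary relation symbols `<_P` and `<_V`. -/
def L : Language := ⟨fun _ => Empty, TwoRel⟩

/-- The `L`-structure on `Fin n` associated with a permutation `σ` of `{1,…,n}`:
`i <_P j` iff `i < j` and `i <_V j` iff `σ i < σ j`. -/
def pStruct {n : ℕ} (σ : Equiv.Perm (Fin n)) : L.Structure (Fin n) where
  funMap := fun f _ => nomatch f
  RelMap := fun r x =>
    match r with
    | .lp => x 0 < x 1
    | .lv => σ (x 0) < σ (x 1)

/-- A permutation satisfies a first-order sentence. -/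
def Sat {n : ℕ} (σ : Equiv.Perm (Fin n)) (ψ : L.Sentence) : Prop :=
  @Language.Sentence.Realize L (Fin n) (pStruct σ) ψ

/-- The quantifier depth of a first-order formula. -/
def qd {L' : Language} {α : Type*} : ∀ {n : ℕ}, L'.BoundedFormula α n → ℕ
  | _, .falsum => 0
  | _, .equal _ _ => 0
  | _, .rel _ _ => 0
  | _, .imp f g => max (qd f) (qd g)
  | _, .all f => qd f + 1

/-- A permutation avoids the pattern `231`. -/
def Avoids {n : ℕ} (σ : Equiv.Perm (Fin n)) : Prop :=
  ¬ ∃ i j k : Fin n, i < j ∧ j < k ∧ σ k < σ i ∧ σ i < σ j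

/-- The number of `231`-avoiding permutations of size `n` satisfying `ψ`. -/
noncomputable def avN (n : ℕ) (ψ : L.Sentence) : ℕ :=
  Nat.card {σ : Equiv.Perm (Fin n) // Avoids σ ∧ Sat σ ψ}

/-- The probability that a uniform random `231`-avoiding permutation of size `n`
satisfies `ψ` (the number of `231`-avoiding permutations of size `n` is `catalan n`). -/
noncomputable def prob (n : ℕ) (ψ : L.Sentence) : ℝ :=
  (avN n ψ : ℝ) / (catalan n : ℝ)

/-- Permutations of arbitrary finite size. -/
abbrev FinPerm := Σ n : ℕ, Equiv.Perm (Fin n)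

def AvoidsF (p : FinPerm) : Prop := Avoids p.2

/-- Direct sum of permutations. -/
def dsum {a b : ℕ} (σ : Equiv.Perm (Fin a)) (τ : Equiv.Perm (Fin b)) :
    Equiv.Perm (Fin (a + b)) :=
  finSumFinEquiv.permCongr (Equiv.sumCongr σ τ)

/-- Skew sum of permutations. -/
def ssum {a b : ℕ} (σ : Equiv.Perm (Fin a)) (τ : Equiv.Perm (Fin b)) :
    Equiv.Perm (Fin (a + b)) :=
  finSumFinEquiv.symm.trans ((Equiv.sumCongr σ τ).trans
    ((Equiv.sumComm (Fin a) (Fin b)).trans (finSumFinEquiv.trans (finCongr (Nat.add_comm b a)))))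

/-- The operation `(τ, π) ↦ τ ⊕ (1 ⊖ π)` on permutations of arbitrary sizes. -/
def glue (τ π : FinPerm) : FinPerm :=
  ⟨τ.1 + (1 + π.1), dsum τ.2 (ssum (1 : Equiv.Perm (Fin 1)) π.2)⟩

/-- Two permutations are `k`-equivalent when they satisfy the same first-order sentences
of quantifier depth at most `k`. -/
def kEquiv (k : ℕ) (p q : FinPerm) : Prop :=
  ∀ ψ : L.Sentence, qd ψ ≤ k → (Sat p.2 ψ ↔ Sat q.2 ψ)

/-!
In a 231-avoiding permutation the maximum splits the one-line notation into a left and a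
right block, and every left value is smaller than every right value (otherwise left value,
maximum, right value form a 231). Counting values then forces the left block to carry exactly
the smallest values, so the permutation is `τ ⊕ (1 ⊖ π)`; conversely `τ ⊕ (1 ⊖ π)` avoids 231
iff `τ` and `π` do. This gives the Catalan recursion `|Av_{n+1}| = ∑ |Av_i| |Av_{n-i}|`, and
once `τ = ρ` (or `π = ρ`) is fixed, `Cat_{n-|ρ|-1}` choices of the other part remain. Finally
`Cat_n / Cat_{n+1} = (n+2) / (2(2n+1)) → 1/4`.
-/

open Equiv

lemma Avoids.of_strictMono {m n : ℕ} {σ : Perm (Fin n)} (hσ : Avoids σ) {σ' : Perm (Fin m)}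
    {f : Fin m → Fin n} {g : Fin m → ℕ} (hf : StrictMono f) (hg : StrictMono g)
    (h : ∀ x, (σ (f x) : ℕ) = g (σ' x)) : Avoids σ' := by
  rintro ⟨i, j, k, hij, hjk, hki, hij'⟩
  refine hσ ⟨f i, f j, f k, hf hij, hf hjk, ?_, ?_⟩ <;> rw [Fin.lt_def, h, h]
  exacts [hg hki, hg hij']

lemma Avoids.lt_of_lt_of_lt {n : ℕ} {σ : Perm (Fin n)} (hσ : Avoids σ) {p i k : Fin n}
    (hp : ∀ x, σ x ≤ σ p) (hi : i < p) (hk : p < k) : σ i < σ k := by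
  by_contra! h
  exact hσ ⟨i, p, k, hi, hk, h.lt_of_ne (σ.injective.ne (hi.trans hk).ne'),
    (hp i).lt_of_ne (σ.injective.ne hi.ne)⟩

lemma avoids_permCongr_finCongr {m n : ℕ} (h : m = n) (σ : Perm (Fin m)) :
    Avoids ((finCongr h).permCongr σ) ↔ Avoids σ := by
  subst h
  rfl

lemma le_of_injective_of_forall_lt {m n : ℕ} {f : Fin m → Fin n} (hf : Function.Injective f)
    {p q : ℕ} (hp : p ≤ m) (h : ∀ x : Fin m, (x : ℕ) < p → (f x : ℕ) < q) : p ≤ q :=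
  Fin.le_of_injective (fun x : Fin p => (⟨f ⟨x, by omega⟩, h _ x.isLt⟩ : Fin q))
    fun x y hxy => Fin.ext (by simpa using hf (Fin.ext (Fin.mk.inj_iff.1 hxy)))

lemma catalan_pos (n : ℕ) : 0 < catalan n :=
  Nat.pos_of_mul_pos_left ((succ_mul_catalan_eq_centralBinom n).symm ▸ n.centralBinom_pos)

lemma succ_succ_mul_catalan_succ (n : ℕ) :
    (n + 2) * catalan (n + 1) = 2 * (2 * n + 1) * catalan n := by
  refine Nat.eq_of_mul_eq_mul_left n.succ_pos ?_
  calc (n + 1) * ((n + 2) * catalan (n + 1)) = (n + 1) * (n + 1).centralBinom := by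
        rw [← succ_mul_catalan_eq_centralBinom]
    _ = 2 * (2 * n + 1) * n.centralBinom := Nat.succ_mul_centralBinom_succ n
    _ = (n + 1) * (2 * (2 * n + 1) * catalan n) := by
        rw [← succ_mul_catalan_eq_centralBinom]; ring

lemma tendsto_catalan_div_catalan_succ :
    Tendsto (fun n => (catalan n : ℝ) / catalan (n + 1)) atTop (𝓝 (1 / 4)) := by
  have h := ((tendsto_const_div_atTop_nhds_zero_nat (2 : ℝ)).const_add 1).div
    ((tendsto_const_div_atTop_nhds_zero_nat (2 : ℝ)).const_add 4) (by norm_num)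
  rw [show ((1 : ℝ) + 0) / (4 + 0) = 1 / 4 by norm_num] at h
  -- `Cat_n / Cat_{n+1} = (n + 2) / (2 (2n + 1)) = (1 + 2/n) / (4 + 2/n)`
  refine h.congr' ((eventually_ne_atTop 0).mono fun n hn => ?_)
  have hrec : ((n : ℝ) + 2) * catalan (n + 1) = 2 * (2 * n + 1) * catalan n := by
    exact_mod_cast succ_succ_mul_catalan_succ n
  have := catalan_pos (n + 1)
  have hn' : (n : ℝ) ≠ 0 := by exact_mod_cast hn
  rw [Pi.div_apply, div_eq_div_iff (by positivity) (by positivity)]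
  field_simp
  linarith

lemma tendsto_catalan_div_catalan_add (k : ℕ) :
    Tendsto (fun n => (catalan n : ℝ) / catalan (n + k)) atTop (𝓝 ((1 / 4) ^ k)) := by
  induction k with
  | zero =>
    simp only [add_zero, pow_zero]
    exact tendsto_const_nhds.congr fun n => (div_self (by exact_mod_cast (catalan_pos n).ne')).symm
  | succ k ih =>
    refine (ih.mul (tendsto_catalan_div_catalan_succ.comp (tendsto_add_atTop_nat k))).congr
      fun n => ?_
    have := catalan_pos (n + k)
    simp only [Function.comp_apply, ← add_assoc]
    field_simp

lemma tendsto_catalan_sub_div_catalan (k : ℕ) :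
    Tendsto (fun n => (catalan (n - k) : ℝ) / catalan n) atTop (𝓝 ((1 / 4) ^ k)) :=
  ((tendsto_catalan_div_catalan_add k).comp (tendsto_sub_atTop_nat k)).congr'
    ((eventually_ge_atTop k).mono fun n hn => by simp [Nat.sub_add_cancel hn])

section GluePerm

variable {a b : ℕ}

def gluePerm (τ : Perm (Fin a)) (π : Perm (Fin b)) : Perm (Fin (a + (1 + b))) :=
  dsum τ (ssum 1 π)

section
variable (τ : Perm (Fin a)) (π : Perm (Fin b)) (i : Fin (a + (1 + b)))

lemma gluePerm_apply_of_lt (hi : (i : ℕ) < a) : (gluePerm τ π i : ℕ) = τ ⟨i, hi⟩ := by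
  obtain ⟨x, rfl⟩ : ∃ x : Fin a, Fin.castAdd (1 + b) x = i := ⟨⟨i, hi⟩, rfl⟩
  simp [gluePerm, dsum, Equiv.permCongr_apply]

lemma gluePerm_apply_of_eq (hi : (i : ℕ) = a) : (gluePerm τ π i : ℕ) = a + b := by
  obtain rfl : Fin.natAdd a (Fin.castAdd b 0) = i := Fin.ext (by simp [hi])
  simp [gluePerm, dsum, ssum, Equiv.permCongr_apply]

lemma gluePerm_apply_of_gt (hi : a < (i : ℕ)) :
    (gluePerm τ π i : ℕ) = a + π ⟨i - (a + 1), by omega⟩ := by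
  have key (y : Fin b) (hy : Fin.natAdd a (Fin.natAdd 1 y) = i) :
      (gluePerm τ π i : ℕ) = a + π y := by
    subst hy
    simp [gluePerm, dsum, ssum, Equiv.permCongr_apply]
  exact key _ (Fin.ext (by simp only [Fin.val_natAdd]; omega))

lemma gluePerm_lt_iff : (gluePerm τ π i : ℕ) < a ↔ (i : ℕ) < a := by
  rcases lt_trichotomy (i : ℕ) a with hi | hi | hi
  · simp [hi, gluePerm_apply_of_lt τ π i hi]
  · simp [hi, gluePerm_apply_of_eq τ π i hi]
  · simp [gluePerm_apply_of_gt τ π i hi, hi.le]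
end

lemma avoids_gluePerm_iff (τ : Perm (Fin a)) (π : Perm (Fin b)) :
    Avoids (gluePerm τ π) ↔ Avoids τ ∧ Avoids π := by
  refine ⟨fun h => ⟨?_, ?_⟩, fun ⟨hτ, hπ⟩ => ?_⟩
  · exact h.of_strictMono (Fin.strictMono_castAdd _) Fin.val_strictMono
      fun x => gluePerm_apply_of_lt τ π _ x.isLt
  · refine h.of_strictMono (f := fun y => ⟨a + 1 + y, by omega⟩) (g := fun y => a + y)
      (fun y y' hy => by simpa using hy) (fun y y' hy => by simpa using hy) fun y => ?_
    rw [gluePerm_apply_of_gt τ π _ (by dsimp only; omega)]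
    simp
  · rintro ⟨i, j, k, hij, hjk, hki, hij'⟩
    rw [Fin.lt_def] at hij hjk hki hij'
    rcases lt_trichotomy (i : ℕ) a with hi | hi | hi
    · by_cases hk : (k : ℕ) < a
      · have hj : (j : ℕ) < a := by omega
        rw [gluePerm_apply_of_lt τ π _ hk, gluePerm_apply_of_lt τ π _ hi] at hki
        rw [gluePerm_apply_of_lt τ π _ hj, gluePerm_apply_of_lt τ π _ hi] at hij'
        exact hτ ⟨⟨i, hi⟩, ⟨j, hj⟩, ⟨k, hk⟩, hij, hjk, hki, hij'⟩
      · have := (gluePerm_lt_iff τ π i).2 hi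
        have := (gluePerm_lt_iff τ π k).not.2 hk
        omega
    · have := (gluePerm τ π j).isLt
      rw [gluePerm_apply_of_eq τ π _ hi] at hij'
      omega
    · have hj : a < (j : ℕ) := by omega
      have hk : a < (k : ℕ) := by omega
      rw [gluePerm_apply_of_gt τ π _ hk, gluePerm_apply_of_gt τ π _ hi] at hki
      rw [gluePerm_apply_of_gt τ π _ hj, gluePerm_apply_of_gt τ π _ hi] at hij'
      exact hπ ⟨⟨i - (a + 1), by omega⟩, ⟨j - (a + 1), by omega⟩,
        ⟨k - (a + 1), by omega⟩, Fin.mk_lt_mk.2 (by omega), Fin.mk_lt_mk.2 (by omega),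
        by simpa using hki, by simpa using hij'⟩

lemma gluePerm_inj {τ τ' : Perm (Fin a)} {π π' : Perm (Fin b)} :
    gluePerm τ π = gluePerm τ' π' ↔ τ = τ' ∧ π = π' := by
  refine ⟨fun h => ⟨Equiv.ext fun x => Fin.ext ?_, Equiv.ext fun y => Fin.ext ?_⟩,
    fun ⟨hτ, hπ⟩ => hτ ▸ hπ ▸ rfl⟩
  · have := congrArg (fun σ => (σ ⟨x, by omega⟩ : ℕ)) h
    simpa only [gluePerm_apply_of_lt _ _ ⟨x, _⟩ x.isLt] using this
  · have hy : a < a + 1 + (y : ℕ) := by omega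
    have := congrArg (fun σ => (σ ⟨a + 1 + y, by omega⟩ : ℕ)) h
    simpa [gluePerm_apply_of_gt _ _ ⟨a + 1 + y, _⟩ hy] using this

lemma exists_gluePerm_eq_of_blocks (σ : Perm (Fin (a + (1 + b))))
    (hl : ∀ i : Fin (a + (1 + b)), (i : ℕ) < a → (σ i : ℕ) < a)
    (hm : ∀ i : Fin (a + (1 + b)), (i : ℕ) = a → (σ i : ℕ) = a + b)
    (hr : ∀ k : Fin (a + (1 + b)), a < (k : ℕ) → a ≤ (σ k : ℕ)) :
    ∃ τ π, gluePerm τ π = σ := by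
  have hr_lt (k : Fin (a + (1 + b))) (hk : a < (k : ℕ)) : (σ k : ℕ) - a < b := by
    have hne : σ k ≠ σ ⟨a, by omega⟩ := σ.injective.ne (Fin.ne_of_val_ne hk.ne')
    have := hm ⟨a, by omega⟩ rfl
    have := hr k hk
    have := (σ k).isLt
    omega
  let τ : Fin a → Fin a := fun x => ⟨σ ⟨x, by omega⟩, hl _ x.isLt⟩
  let π : Fin b → Fin b := fun y =>
    ⟨σ ⟨a + 1 + y, by omega⟩ - a, hr_lt _ (by dsimp only; omega)⟩
  have hτ : Function.Injective τ := fun x y hxy =>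
    Fin.ext (by simpa using σ.injective (Fin.ext (Fin.mk.inj_iff.1 hxy)))
  have hπ : Function.Injective π := fun x y hxy => by
    simp only [π, Fin.mk.injEq] at hxy
    have := hr ⟨a + 1 + x, by omega⟩ (by dsimp only; omega)
    have := hr ⟨a + 1 + y, by omega⟩ (by dsimp only; omega)
    have hxy' : (σ ⟨a + 1 + x, by omega⟩ : ℕ) = σ ⟨a + 1 + y, by omega⟩ := by omega
    simpa [Fin.ext_iff] using σ.injective (Fin.ext hxy')
  refine ⟨.ofBijective τ hτ.bijective_of_finite, .ofBijective π hπ.bijective_of_finite,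
    Equiv.ext fun z => Fin.ext ?_⟩
  rcases lt_trichotomy (z : ℕ) a with hz | hz | hz
  · rw [gluePerm_apply_of_lt _ _ _ hz]
    rfl
  · rw [gluePerm_apply_of_eq _ _ _ hz, hm z hz]
  · rw [gluePerm_apply_of_gt _ _ _ hz]
    have := hr z hz
    have hz' : (⟨a + 1 + (z - (a + 1)), by omega⟩ : Fin (a + (1 + b))) = z :=
      Fin.ext (by dsimp only; omega)
    simp only [Equiv.ofBijective_apply, π, hz']
    omega

lemma Avoids.exists_gluePerm_eq {σ : Perm (Fin (a + (1 + b)))} (hσ : Avoids σ)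
    (hmax : (σ ⟨a, by omega⟩ : ℕ) = a + b) : ∃ τ π, gluePerm τ π = σ := by
  set p : Fin (a + (1 + b)) := ⟨a, by omega⟩
  have hp (x : Fin (a + (1 + b))) : σ x ≤ σ p := by
    rw [Fin.le_def, hmax]
    have := (σ x).isLt
    omega
  refine exists_gluePerm_eq_of_blocks σ (fun i hi => ?_) (fun i hi => ?_) (fun k hk => ?_)
  -- every value `≤ σ i` sits left of the maximum, so there are at most `a` of them
  · refine le_of_injective_of_forall_lt σ.symm.injective (q := a) (σ i).isLt fun w hw => ?_
    obtain ⟨x, rfl⟩ := σ.surjective w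
    rw [Equiv.symm_apply_apply]
    by_contra! hx
    have hip : p ≠ i := Fin.ne_of_val_ne (by dsimp only [p]; omega)
    rcases hx.eq_or_lt with hx | hx
    · have := (hp i).lt_of_ne (σ.injective.ne hip.symm)
      rw [show x = p from Fin.ext hx.symm] at hw
      rw [Fin.lt_def] at this
      omega
    · have := hσ.lt_of_lt_of_lt hp (Fin.lt_def.2 hi) (Fin.lt_def.2 hx)
      rw [Fin.lt_def] at this
      omega
  · rw [show i = p from Fin.ext hi, hmax]
  -- the `a` values left of the maximum are all below `σ k`
  · exact le_of_injective_of_forall_lt σ.injective (by omega) fun x hx =>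
      hσ.lt_of_lt_of_lt hp (Fin.mk_lt_mk.2 hx) (Fin.mk_lt_mk.2 hk)

lemma card_avoids_gluePerm_left {τ : Perm (Fin a)} (hτ : Avoids τ) :
    Nat.card {σ : Perm (Fin (a + (1 + b))) // Avoids σ ∧ ∃ π, σ = gluePerm τ π} =
      Nat.card {π : Perm (Fin b) // Avoids π} := by
  have : {σ : Perm (Fin (a + (1 + b))) | Avoids σ ∧ ∃ π, σ = gluePerm τ π} =
      gluePerm τ '' {π | Avoids π} := by
    ext σ
    constructor
    · rintro ⟨hσ, π, rfl⟩
      exact ⟨π, ((avoids_gluePerm_iff τ π).1 hσ).2, rfl⟩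
    · rintro ⟨π, hπ, rfl⟩
      exact ⟨(avoids_gluePerm_iff τ π).2 ⟨hτ, hπ⟩, π, rfl⟩
  exact (Nat.card_congr (Equiv.setCongr this)).trans
    (Nat.card_image_of_injective (fun _ _ h => (gluePerm_inj.1 h).2) _)

lemma card_avoids_gluePerm_right {π : Perm (Fin b)} (hπ : Avoids π) :
    Nat.card {σ : Perm (Fin (a + (1 + b))) // Avoids σ ∧ ∃ τ, σ = gluePerm τ π} =
      Nat.card {τ : Perm (Fin a) // Avoids τ} := by
  have : {σ : Perm (Fin (a + (1 + b))) | Avoids σ ∧ ∃ τ, σ = gluePerm τ π} =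
      (gluePerm · π) '' {τ : Perm (Fin a) | Avoids τ} := by
    ext σ
    constructor
    · rintro ⟨hσ, τ, rfl⟩
      exact ⟨τ, ((avoids_gluePerm_iff τ π).1 hσ).1, rfl⟩
    · rintro ⟨τ, hτ, rfl⟩
      exact ⟨(avoids_gluePerm_iff τ π).2 ⟨hτ, hπ⟩, τ, rfl⟩
  exact (Nat.card_congr (Equiv.setCongr this)).trans
    (Nat.card_image_of_injective (fun _ _ h => (gluePerm_inj.1 h).1) _)

lemma card_avoids_max_at :
    Nat.card {σ : Perm (Fin (a + (1 + b))) // Avoids σ ∧ (σ ⟨a, by omega⟩ : ℕ) = a + b} =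
      Nat.card {τ : Perm (Fin a) // Avoids τ} * Nat.card {π : Perm (Fin b) // Avoids π} := by
  have : {σ : Perm (Fin (a + (1 + b))) | Avoids σ ∧ (σ ⟨a, by omega⟩ : ℕ) = a + b} =
      (fun p => gluePerm p.1 p.2) '' ({τ | Avoids τ} ×ˢ {π | Avoids π}) := by
    ext σ
    constructor
    · rintro ⟨hσ, hmax⟩
      obtain ⟨τ, π, rfl⟩ := hσ.exists_gluePerm_eq hmax
      exact ⟨(τ, π), (avoids_gluePerm_iff τ π).1 hσ, rfl⟩
    · rintro ⟨⟨τ, π⟩, hτπ, rfl⟩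
      exact ⟨(avoids_gluePerm_iff τ π).2 hτπ, gluePerm_apply_of_eq τ π _ rfl⟩
  refine (Nat.card_congr (Equiv.setCongr this)).trans ?_
  rw [Nat.card_image_of_injective (fun _ _ h => Prod.ext_iff.2 (gluePerm_inj.1 h)),
    Nat.card_coe_set_eq, Set.ncard_prod]
  rfl

lemma card_avoids_succ (n : ℕ) :
    Nat.card {σ : Perm (Fin (n + 1)) // Avoids σ} =
      ∑ i : Fin (n + 1), Nat.card {τ : Perm (Fin i) // Avoids τ} *
        Nat.card {π : Perm (Fin (n - i)) // Avoids π} := by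
  rw [← Nat.card_congr (Equiv.sigmaFiberEquiv fun σ : {σ : Perm (Fin (n + 1)) // Avoids σ} =>
    σ.1.symm (Fin.last n)), Nat.card_sigma]
  refine Finset.sum_congr rfl fun p _ => ?_
  have h : (p : ℕ) + (1 + (n - p)) = n + 1 := by omega
  rw [← card_avoids_max_at]
  refine Nat.card_congr ((Equiv.subtypeSubtypeEquivSubtypeInter Avoids
    (fun σ => σ.symm (Fin.last n) = p)).trans
    (Equiv.subtypeEquiv (finCongr h.symm).permCongr fun σ => ?_))
  rw [avoids_permCongr_finCongr, Equiv.permCongr_apply, Equiv.symm_apply_eq, Fin.ext_iff]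
  refine and_congr_right fun _ => ?_
  simp only [Fin.val_last, finCongr_symm, finCongr_apply, Fin.cast_mk, Fin.eta, Fin.val_cast]
  omega

theorem card_avoids (n : ℕ) : Nat.card {σ : Perm (Fin n) // Avoids σ} = catalan n := by
  induction n using Nat.strong_induction_on with
  | _ n ih =>
    cases n with
    | zero => simp [Avoids]
    | succ n =>
      rw [card_avoids_succ, catalan_succ]
      exact Finset.sum_congr rfl fun i _ => by rw [ih i (by omega), ih (n - i) (by omega)]

lemma exists_mk_eq_glue_left_iff (τ : Perm (Fin a)) (σ : Perm (Fin (a + (1 + b)))) :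
    (∃ π : FinPerm, (⟨a + (1 + b), σ⟩ : FinPerm) = glue ⟨a, τ⟩ π) ↔
      ∃ π, σ = gluePerm τ π := by
  refine ⟨fun ⟨⟨m, π⟩, h⟩ => ?_, fun ⟨π, h⟩ => ⟨⟨b, π⟩, h ▸ rfl⟩⟩
  obtain rfl : b = m := by simpa [glue] using congrArg Sigma.fst h
  exact ⟨π, eq_of_heq (Sigma.mk.inj h).2⟩

lemma exists_mk_eq_glue_right_iff (π : Perm (Fin b)) (σ : Perm (Fin (a + (1 + b)))) :
    (∃ τ : FinPerm, (⟨a + (1 + b), σ⟩ : FinPerm) = glue τ ⟨b, π⟩) ↔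
      ∃ τ, σ = gluePerm τ π := by
  refine ⟨fun ⟨⟨m, τ⟩, h⟩ => ?_, fun ⟨τ, h⟩ => ⟨⟨a, τ⟩, h ▸ rfl⟩⟩
  obtain rfl : a = m := by simpa [glue] using congrArg Sigma.fst h
  exact ⟨τ, eq_of_heq (Sigma.mk.inj h).2⟩

end GluePerm

/-- Decomposing a uniform random 231-avoiding permutation of size `n` as
`σ = τ ⊕ (1 ⊖ π)`, for every fixed 231-avoiding `ρ` the probabilities
`P(τ = ρ)` and `P(π = ρ)` both converge to `4^{-|ρ|-1}`. -/
theorem part_distribution_limit (ρ : FinPerm) (hρ : AvoidsF ρ) :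
    Tendsto (fun n : ℕ => (Nat.card {σ : Equiv.Perm (Fin n) //
          Avoids σ ∧ ∃ π : FinPerm, (⟨n, σ⟩ : FinPerm) = glue ρ π} : ℝ) / (catalan n : ℝ))
        atTop (𝓝 ((4 : ℝ) ^ (-(ρ.1 : ℤ) - 1))) ∧
    Tendsto (fun n : ℕ => (Nat.card {σ : Equiv.Perm (Fin n) //
          Avoids σ ∧ ∃ τ : FinPerm, (⟨n, σ⟩ : FinPerm) = glue τ ρ} : ℝ) / (catalan n : ℝ))
        atTop (𝓝 ((4 : ℝ) ^ (-(ρ.1 : ℤ) - 1))) := by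
  obtain ⟨a, ρ⟩ := ρ
  have hpow : (4 : ℝ) ^ (-(a : ℤ) - 1) = (1 / 4) ^ (a + 1) := by
    rw [← neg_add', zpow_neg, one_div, inv_pow]
    norm_cast
  dsimp only
  rw [hpow]
  constructor
  · refine (tendsto_catalan_sub_div_catalan (a + 1)).congr'
      ((eventually_ge_atTop (a + 1)).mono fun n hn => ?_)
    obtain ⟨b, rfl⟩ : ∃ b, n = a + (1 + b) := ⟨n - (a + 1), by omega⟩
    simp_rw [exists_mk_eq_glue_left_iff]
    rw [card_avoids_gluePerm_left hρ, card_avoids, show a + (1 + b) - (a + 1) = b by omega]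
  · refine (tendsto_catalan_sub_div_catalan (a + 1)).congr'
      ((eventually_ge_atTop (a + 1)).mono fun n hn => ?_)
    obtain ⟨t, rfl⟩ : ∃ t, n = t + (1 + a) := ⟨n - (a + 1), by omega⟩
    simp_rw [exists_mk_eq_glue_right_iff]
    rw [card_avoids_gluePerm_right hρ, card_avoids, show t + (1 + a) - (a + 1) = t by omega]

end Av231
end

section
/- Fix k ≥ 2 and let G_k be the dependency graph of the type-refined system for Av(231): vertices are the types in 𝒯_k, with an edge u → t whenever ∂F_t/∂C_u ≠ 0, where F_t(z; C_u, u ∈ 𝒯_k) = δ_{t,∅} + z Σ_{H_k(t_1,t_2)=t} C_{t_1} C_{t_2}. Then for any two vertices u_1, u_2 of G_k there exists a vertex t with edges u_1 → t and u_2 → t (namely t = H_k(u_1,u_2)); consequently, G_k has a unique terminal strongly connected component. -/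
open FirstOrder Filter Asymptotics Topology

/-- `k`-equivalence as a setoid on finite permutations. -/
def kSetoid (k : ℕ) : Setoid Av231.FinPerm :=
  ⟨Av231.kEquiv k,
    ⟨fun _ _ _ => Iff.rfl, fun h ψ hψ => (h ψ hψ).symm,
      fun h h' ψ hψ => (h ψ hψ).trans (h' ψ hψ)⟩⟩

namespace Av231

/-- Logical types of order `k`: equivalence classes of `≡ₖ`. -/
def QT (k : ℕ) := Quotient (kSetoid k)

/-- The logical type of order `k` of a permutation. -/
def typeOf (k : ℕ) (p : FinPerm) : QT k := Quotient.mk (kSetoid k) p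

/-- A type is realized when some `231`-avoiding permutation has this type;
`𝒯ₖ` consists of the realized types. -/
def Realized (k : ℕ) (t : QT k) : Prop := ∃ p : FinPerm, AvoidsF p ∧ typeOf k p = t

/-- The number of `231`-avoiding permutations of size `n` whose logical type of order `k`
is `t`, i.e. the `n`-th coefficient of the generating series `C_t`. -/
noncomputable def cnt (k : ℕ) (t : QT k) (n : ℕ) : ℕ :=
  Nat.card {σ : Equiv.Perm (Fin n) // Avoids σ ∧ typeOf k ⟨n, σ⟩ = t}

/-- The type of the empty permutation. -/
def emptyType (k : ℕ) : QT k := typeOf k ⟨0, 1⟩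

/-- `H_k(t₁,t₂)`: the type of `τ ⊕ (1 ⊖ π)` where `τ, π` are representatives
of `t₁, t₂` respectively. -/
noncomputable def Hfun (k : ℕ) (t₁ t₂ : QT k) : QT k :=
  typeOf k (glue (Quotient.out t₁) (Quotient.out t₂))

/-- The edge relation `u → t` of the dependency graph `G_k`:
`∂F_t/∂C_u ≠ 0`, i.e. some `v ∈ 𝒯ₖ` satisfies `H_k(u,v) = t` or `H_k(v,u) = t`. -/
def Edge (k : ℕ) (u t : QT k) : Prop :=
  ∃ v : QT k, Realized k v ∧ (Hfun k u v = t ∨ Hfun k v u = t)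

/-- The set `𝒯ₖ` of types realized by `231`-avoiding permutations, as a type. -/
def Tk (k : ℕ) := {t : QT k // Realized k t}

/-- The edge relation of `G_k` restricted to `𝒯ₖ`. -/
def EdgeT (k : ℕ) (u t : Tk k) : Prop := Edge k u.1 t.1

/-- `S` is a terminal strongly connected component of the dependency graph `G_k`:
it is nonempty, any vertex of `S` reaches any other, and no edge leaves `S`
(this forces maximality, hence being an SCC). -/
def IsTermSCC (k : ℕ) (S : Set (Tk k)) : Prop :=
  S.Nonempty ∧ (∀ u ∈ S, ∀ v ∈ S, Relation.ReflTransGen (EdgeT k) u v) ∧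
    (∀ u ∈ S, ∀ v : Tk k, EdgeT k u v → v ∈ S)

/-- A sequence of coefficients is periodic when, for some `d ≥ 2` and `r`,
it vanishes outside `dℤ + r`. -/
def SeqPeriodic (a : ℕ → ℝ) : Prop :=
  ∃ d : ℕ, 2 ≤ d ∧ ∃ r : ℕ, ∀ n : ℕ, n % d ≠ r % d → a n = 0

/-- The generating series `C_t` of `231`-avoiding permutations of type `t`,
evaluated at a complex number `z`. -/
noncomputable def Ct (k : ℕ) (t : QT k) (z : ℂ) : ℂ :=
  ∑' n : ℕ, (cnt k t n : ℂ) * z ^ n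

/-- The Catalan generating function. -/
noncomputable def catGF (z : ℂ) : ℂ := ∑' n : ℕ, (catalan n : ℂ) * z ^ n

/-- The entry `M_k(z)_{t,u} = ∂F_t/∂C_u (z; C_v(z), v ∈ 𝒯ₖ)` of the Jacobian matrix of the
type-refined system. -/
noncomputable def Mmat (k : ℕ) (z : ℂ) (t u : QT k) : ℂ :=
  z * ((∑' v : {v : QT k // Realized k v ∧ Hfun k u v = t}, Ct k v.1 z) +
       (∑' v : {v : QT k // Realized k v ∧ Hfun k v u = t}, Ct k v.1 z))

/-- `lam` is an eigenvalue of the (possibly infinite) matrix `A`, witnessed by a finitely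
supported eigenvector. For finite index types this is the usual notion of eigenvalue. -/
def IsEig {α : Type*} (A : α → α → ℂ) (lam : ℂ) : Prop :=
  ∃ v : α →₀ ℂ, v ≠ 0 ∧ ∀ x : α, ∑ y ∈ v.support, A x y * v y = lam * v x

/-!
`H_k(u₁,u₂)` is itself a common out-neighbour of `u₁` and `u₂` (take `v = u₂`, resp. `v = u₁`,
in the definition of an edge). It lies in `𝒯ₖ` because `Av(231)` is closed under
`(τ, π) ↦ τ ⊕ (1 ⊖ π)` and this operation respects `≡ₖ`. The latter is the
Ehrenfeucht–Fraïssé composition argument for block sums: the relative order of two points in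
different blocks is fixed, so a strategy on each block combines into one on the sum. Hintikka
formulas identify `≡ₖ` with equality of a finitary invariant (the `k`-round game tree), so there
are finitely many types. In a finite digraph in which any two vertices have a common successor,
some vertex `t` is reachable from all vertices; the vertices reachable from `t` form a terminal
strongly connected component, and every terminal component contains a common successor of one
of its vertices and of `t`, hence is this one.
-/

end Av231

namespace Relation

variable {α : Type*}

structure IsTerminalComponent (r : α → α → Prop) (S : Set α) : Prop where
  nonempty : S.Nonempty
  reachable : ∀ u ∈ S, ∀ v ∈ S, ReflTransGen r u v
  closed : ∀ u ∈ S, ∀ v, r u v → v ∈ S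

variable {r : α → α → Prop}

theorem IsTerminalComponent.eq_setOf_reflTransGen {S : Set α} (hS : IsTerminalComponent r S)
    {t : α} (ht : t ∈ S) : S = {v | ReflTransGen r t v} := by
  ext v
  refine ⟨hS.reachable t ht v, fun hv => ?_⟩
  induction hv with
  | refl => exact ht
  | tail _ huv ih => exact hS.closed _ ih _ huv

theorem IsTerminalComponent.eq_of_common_successor (h : ∀ u v, ∃ t, r u t ∧ r v t)
    {S T : Set α} (hS : IsTerminalComponent r S) (hT : IsTerminalComponent r T) : S = T := by
  obtain ⟨s, hs⟩ := hS.nonempty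
  obtain ⟨t, ht⟩ := hT.nonempty
  obtain ⟨c, hsc, htc⟩ := h s t
  rw [hS.eq_setOf_reflTransGen (hS.closed s hs c hsc),
    hT.eq_setOf_reflTransGen (hT.closed t ht c htc)]

theorem exists_forall_reflTransGen_of_common_successor [Finite α] [Nonempty α]
    (h : ∀ u v, ∃ t, r u t ∧ r v t) : ∃ t, ∀ u, ReflTransGen r u t := by
  have : Fintype α := Fintype.ofFinite α
  have hdir : Directed (ReflTransGen r) id := fun u v =>
    (h u v).imp fun _ ht => ⟨.single ht.1, .single ht.2⟩
  obtain ⟨t, ht⟩ := hdir.finset_le Finset.univ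
  exact ⟨t, fun u => ht u (Finset.mem_univ u)⟩

theorem existsUnique_isTerminalComponent_of_common_successor [Finite α] [Nonempty α]
    (h : ∀ u v, ∃ t, r u t ∧ r v t) : ∃! S, IsTerminalComponent r S := by
  obtain ⟨t, ht⟩ := exists_forall_reflTransGen_of_common_successor h
  have hT : IsTerminalComponent r {v | ReflTransGen r t v} :=
    ⟨⟨t, .refl⟩, fun u _ _ hv => (ht u).trans hv, fun _ hu _ huv => hu.tail huv⟩
  exact ⟨_, hT, fun S hS => hS.eq_of_common_successor h hT⟩

end Relation

namespace Av231

open Language BoundedFormula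

section QuantifierDepth

variable {L' : Language} {α : Type*} {l k : ℕ}

@[simp] theorem qd_not (φ : L'.BoundedFormula α l) : qd φ.not = qd φ := by
  simp [qd]

@[simp] theorem qd_inf (φ ψ : L'.BoundedFormula α l) : qd (φ ⊓ ψ) = max (qd φ) (qd ψ) := by
  show qd (φ.imp ψ.not).not = _
  simp [qd]

@[simp] theorem qd_sup (φ ψ : L'.BoundedFormula α l) : qd (φ ⊔ ψ) = max (qd φ) (qd ψ) := by
  show qd (φ.not.imp ψ) = _
  simp [qd]

@[simp] theorem qd_all (φ : L'.BoundedFormula α (l + 1)) : qd φ.all = qd φ + 1 := rfl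

@[simp] theorem qd_ex (φ : L'.BoundedFormula α (l + 1)) : qd φ.ex = qd φ + 1 := by
  simp [BoundedFormula.ex]

@[simp] theorem qd_top : qd (⊤ : L'.BoundedFormula α l) = 0 := rfl

@[simp] theorem qd_bot : qd (⊥ : L'.BoundedFormula α l) = 0 := rfl

theorem qd_iInf_le {β : Type*} [Finite β] {f : β → L'.BoundedFormula α l}
    (h : ∀ b, qd (f b) ≤ k) : qd (iInf f) ≤ k := by
  have := Fintype.ofFinite β
  suffices ∀ fs : List (L'.BoundedFormula α l), (∀ φ ∈ fs, qd φ ≤ k) →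
      qd (fs.foldr (· ⊓ ·) ⊤) ≤ k from this _ (by simpa using h)
  intro fs
  induction fs <;> simp_all

theorem qd_iSup_le {β : Type*} [Finite β] {f : β → L'.BoundedFormula α l}
    (h : ∀ b, qd (f b) ≤ k) : qd (iSup f) ≤ k := by
  have := Fintype.ofFinite β
  suffices ∀ fs : List (L'.BoundedFormula α l), (∀ φ ∈ fs, qd φ ≤ k) →
      qd (fs.foldr (· ⊔ ·) ⊥) ≤ k from this _ (by simpa using h)
  intro fs
  induction fs <;> simp_all

end QuantifierDepth

section EFType

variable {n m l : ℕ}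

def pairType (σ : Equiv.Perm (Fin n)) (x y : Fin n) : Bool × Bool × Bool :=
  (decide (x < y), decide (σ x < σ y), decide (x = y))

theorem pairType_eq_pairType_iff {σ : Equiv.Perm (Fin n)} {τ : Equiv.Perm (Fin m)}
    {x y : Fin n} {x' y' : Fin m} :
    pairType σ x y = pairType τ x' y' ↔
      (x < y ↔ x' < y') ∧ (σ x < σ y ↔ τ x' < τ y') ∧ (x = y ↔ x' = y') := by
  simp only [pairType, Prod.mk.injEq, decide_eq_decide]

def atomicType (σ : Equiv.Perm (Fin n)) (a : Fin l → Fin n) :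
    Fin l → Fin l → Bool × Bool × Bool :=
  fun i j => pairType σ (a i) (a j)

def EFType : ℕ → ℕ → Type
  | 0, l => Fin l → Fin l → Bool × Bool × Bool
  | k + 1, l => (Fin l → Fin l → Bool × Bool × Bool) × Set (EFType k (l + 1))

instance EFType.finite : ∀ k l, Finite (EFType k l)
  | 0, _ => inferInstanceAs (Finite (_ → _))
  | k + 1, l =>
    have := EFType.finite k (l + 1)
    inferInstanceAs (Finite (_ × _))

/-- `efType σ k a` encodes the position `(σ, a)` of the `k`-round Ehrenfeucht–Fraïssé game:
its atomic type and, for `k > 0`, the set of `efType`s of its one-point extensions. -/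
def efType (σ : Equiv.Perm (Fin n)) : (k : ℕ) → {l : ℕ} → (Fin l → Fin n) → EFType k l
  | 0, _, a => atomicType σ a
  | k + 1, _, a => (atomicType σ a, Set.range fun c => efType σ k (Fin.snoc a c))

variable {σ : Equiv.Perm (Fin n)} {τ : Equiv.Perm (Fin m)}

theorem atomicType_eq_of_efType_eq {k : ℕ} {a : Fin l → Fin n} {b : Fin l → Fin m}
    (h : efType σ k a = efType τ k b) : atomicType σ a = atomicType τ b := by
  cases k with
  | zero => exact h
  | succ k => exact congrArg Prod.fst h

theorem efType_succ_eq_iff {k : ℕ} {a : Fin l → Fin n} {b : Fin l → Fin m} :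
    efType σ (k + 1) a = efType τ (k + 1) b ↔
      atomicType σ a = atomicType τ b ∧
      (∀ c, ∃ d, efType σ k (Fin.snoc a c) = efType τ k (Fin.snoc b d)) ∧
      (∀ d, ∃ c, efType σ k (Fin.snoc a c) = efType τ k (Fin.snoc b d)) := by
  change ((_, _) : _ × Set (EFType k (l + 1))) = (_, _) ↔ _
  simp only [Prod.mk.injEq, Set.Subset.antisymm_iff, Set.range_subset_iff, Set.mem_range]
  simp only [eq_comm (b := efType τ k _)]

theorem efType_eq_of_succ_eq : ∀ {k l : ℕ} {a : Fin l → Fin n} {b : Fin l → Fin m},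
    efType σ (k + 1) a = efType τ (k + 1) b → efType σ k a = efType τ k b
  | 0, _, _, _, h => atomicType_eq_of_efType_eq h
  | _ + 1, _, _, _, h => by
    obtain ⟨hat, hforth, hback⟩ := efType_succ_eq_iff.1 h
    refine efType_succ_eq_iff.2 ⟨hat, fun c => ?_, fun d => ?_⟩
    · obtain ⟨d, hd⟩ := hforth c
      exact ⟨d, efType_eq_of_succ_eq hd⟩
    · obtain ⟨c, hc⟩ := hback d
      exact ⟨c, efType_eq_of_succ_eq hc⟩

end EFType

section Holds

variable {n m l : ℕ} {σ : Equiv.Perm (Fin n)} {τ : Equiv.Perm (Fin m)}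

def Holds (σ : Equiv.Perm (Fin n)) (φ : L.BoundedFormula Empty l) (xs : Fin l → Fin n) : Prop :=
  @BoundedFormula.Realize L (Fin n) (pStruct σ) Empty l φ default xs

theorem sat_iff_holds (ψ : L.Sentence) : Sat σ ψ ↔ Holds σ ψ ![] := by
  rw [Subsingleton.elim ![] default]
  rfl

variable {φ ψ : L.BoundedFormula Empty l} {xs : Fin l → Fin n}

@[simp] theorem holds_not : Holds σ φ.not xs ↔ ¬ Holds σ φ xs := Iff.rfl

@[simp] theorem holds_inf : Holds σ (φ ⊓ ψ) xs ↔ Holds σ φ xs ∧ Holds σ ψ xs :=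
  letI := pStruct σ; realize_inf

@[simp] theorem holds_all {φ : L.BoundedFormula Empty (l + 1)} :
    Holds σ φ.all xs ↔ ∀ c, Holds σ φ (Fin.snoc xs c) := Iff.rfl

@[simp] theorem holds_ex {φ : L.BoundedFormula Empty (l + 1)} :
    Holds σ φ.ex xs ↔ ∃ c, Holds σ φ (Fin.snoc xs c) :=
  letI := pStruct σ; realize_ex

@[simp] theorem holds_iInf {β : Type*} [Finite β] {f : β → L.BoundedFormula Empty l} :
    Holds σ (iInf f) xs ↔ ∀ b, Holds σ (f b) xs :=
  letI := pStruct σ; realize_iInf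

@[simp] theorem holds_iSup {β : Type*} [Finite β] {f : β → L.BoundedFormula Empty l} :
    Holds σ (iSup f) xs ↔ ∃ b, Holds σ (f b) xs :=
  letI := pStruct σ; realize_iSup

theorem term_eq_var (t : L.Term (Empty ⊕ Fin l)) : ∃ i, t = var (Sum.inr i) := by
  rcases t with (⟨⟨⟩⟩ | i) | ⟨⟨⟩, _⟩
  exact ⟨i, rfl⟩

theorem holds_iff_of_efType_eq (φ : L.BoundedFormula Empty l) :
    ∀ {k} {a : Fin l → Fin n} {b : Fin l → Fin m},
      qd φ ≤ k → efType σ k a = efType τ k b → (Holds σ φ a ↔ Holds τ φ b) := by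
  induction φ with
  | falsum => exact fun _ _ => Iff.rfl
  | equal t₁ t₂ =>
    intro k a b _ h
    obtain ⟨i, rfl⟩ := term_eq_var t₁
    obtain ⟨j, rfl⟩ := term_eq_var t₂
    exact (pairType_eq_pairType_iff.1 (congrFun₂ (atomicType_eq_of_efType_eq h) i j)).2.2
  | rel R ts =>
    intro k a b _ h
    cases R <;>
    obtain ⟨i, hi⟩ := term_eq_var (ts 0) <;>
    obtain ⟨j, hj⟩ := term_eq_var (ts 1) <;>
    have hij := pairType_eq_pairType_iff.1 (congrFun₂ (atomicType_eq_of_efType_eq h) i j)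
    · exact (show _ < _ ↔ _ < _ by simp only [hi, hj]; exact hij.1)
    · exact (show σ _ < σ _ ↔ τ _ < τ _ by simp only [hi, hj]; exact hij.2.1)
  | imp φ ψ ihφ ihψ =>
    intro k a b hk h
    exact imp_congr (ihφ (le_of_max_le_left hk) h) (ihψ (le_of_max_le_right hk) h)
  | all φ ih =>
    intro k a b hk h
    cases k with
    | zero => exact absurd hk (by simp [qd])
    | succ k =>
      have hφ : qd φ ≤ k := Nat.le_of_succ_le_succ hk
      obtain ⟨-, hforth, hback⟩ := efType_succ_eq_iff.1 h
      show (∀ c, Holds σ φ (Fin.snoc a c)) ↔ ∀ d, Holds τ φ (Fin.snoc b d)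
      refine ⟨fun H d => ?_, fun H c => ?_⟩
      · obtain ⟨c, hc⟩ := hback d
        exact (ih hφ hc).1 (H c)
      · obtain ⟨d, hd⟩ := hforth c
        exact (ih hφ hd).2 (H d)

end Holds

section Hintikka

variable {n m l : ℕ} {σ : Equiv.Perm (Fin n)} {τ : Equiv.Perm (Fin m)}

def posLt (i j : Fin l) : L.BoundedFormula Empty l :=
  Relations.boundedFormula₂ (TwoRel.lp : L.Relations 2) (var (.inr i)) (var (.inr j))

def valLt (i j : Fin l) : L.BoundedFormula Empty l :=
  Relations.boundedFormula₂ (TwoRel.lv : L.Relations 2) (var (.inr i)) (var (.inr j))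

@[simp] theorem holds_posLt (i j : Fin l) (xs : Fin l → Fin n) :
    Holds σ (posLt i j) xs ↔ xs i < xs j := Iff.rfl

@[simp] theorem holds_valLt (i j : Fin l) (xs : Fin l → Fin n) :
    Holds σ (valLt i j) xs ↔ σ (xs i) < σ (xs j) := Iff.rfl

@[simp] theorem holds_bdEqual (i j : Fin l) (xs : Fin l → Fin n) :
    Holds σ ((var (.inr i)).bdEqual (var (.inr j))) xs ↔ xs i = xs j := Iff.rfl

def literal (β : Bool) (φ : L.BoundedFormula Empty l) : L.BoundedFormula Empty l :=
  if β then φ else φ.not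

@[simp] theorem qd_literal (β : Bool) (φ : L.BoundedFormula Empty l) :
    qd (literal β φ) = qd φ := by
  cases β <;> simp [literal]

theorem holds_literal (β : Bool) (φ : L.BoundedFormula Empty l) (xs : Fin l → Fin n) :
    Holds σ (literal β φ) xs ↔ (Holds σ φ xs ↔ β) := by
  cases β <;> simp [literal]

def pairTypeFormula (e : Bool × Bool × Bool) (i j : Fin l) : L.BoundedFormula Empty l :=
  literal e.1 (posLt i j) ⊓ literal e.2.1 (valLt i j) ⊓
    literal e.2.2 ((var (.inr i)).bdEqual (var (.inr j)))

theorem qd_pairTypeFormula (e : Bool × Bool × Bool) (i j : Fin l) :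
    qd (pairTypeFormula e i j) = 0 := by
  simp only [pairTypeFormula, qd_inf, qd_literal]
  rfl

theorem holds_pairTypeFormula (e : Bool × Bool × Bool) (i j : Fin l) (xs : Fin l → Fin n) :
    Holds σ (pairTypeFormula e i j) xs ↔ pairType σ (xs i) (xs j) = e := by
  simp only [pairTypeFormula, holds_inf, holds_literal, holds_posLt, holds_valLt, holds_bdEqual,
    pairType]
  rcases e with ⟨_ | _, _ | _, _ | _⟩ <;> simp [and_assoc]

noncomputable def atomicFormula (σ : Equiv.Perm (Fin n)) (a : Fin l → Fin n) :
    L.BoundedFormula Empty l :=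
  iInf fun ij : Fin l × Fin l => pairTypeFormula (pairType σ (a ij.1) (a ij.2)) ij.1 ij.2

theorem qd_atomicFormula (σ : Equiv.Perm (Fin n)) (a : Fin l → Fin n) :
    qd (atomicFormula σ a) = 0 :=
  Nat.le_zero.1 (qd_iInf_le fun _ => (qd_pairTypeFormula _ _ _).le)

theorem holds_atomicFormula {a : Fin l → Fin n} {b : Fin l → Fin m} :
    Holds τ (atomicFormula σ a) b ↔ atomicType σ a = atomicType τ b := by
  simp only [atomicFormula, holds_iInf, holds_pairTypeFormula, Prod.forall, funext_iff,
    atomicType, eq_comm]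

noncomputable def hintikka (σ : Equiv.Perm (Fin n)) :
    (k : ℕ) → {l : ℕ} → (Fin l → Fin n) → L.BoundedFormula Empty l
  | 0, _, a => atomicFormula σ a
  | k + 1, _, a => atomicFormula σ a ⊓ (iInf fun c => (hintikka σ k (Fin.snoc a c)).ex) ⊓
      (iSup fun c => hintikka σ k (Fin.snoc a c)).all

theorem qd_hintikka : ∀ (k : ℕ) {l : ℕ} (a : Fin l → Fin n), qd (hintikka σ k a) ≤ k
  | 0, _, a => (qd_atomicFormula σ a).le
  | k + 1, _, a => by
    simp only [hintikka, qd_inf, qd_atomicFormula, qd_all, max_le_iff, zero_le, true_and]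
    exact ⟨qd_iInf_le fun c => by simpa using qd_hintikka k _,
      Nat.succ_le_succ (qd_iSup_le fun c => qd_hintikka k _)⟩

theorem holds_hintikka :
    ∀ (k : ℕ) {l : ℕ} {a : Fin l → Fin n} {b : Fin l → Fin m},
      Holds τ (hintikka σ k a) b ↔ efType σ k a = efType τ k b
  | 0, _, _, _ => holds_atomicFormula
  | k + 1, _, _, _ => by
    simp only [hintikka, holds_inf, holds_atomicFormula, holds_iInf, holds_ex, holds_all,
      holds_iSup, holds_hintikka k, efType_succ_eq_iff, and_assoc]

end Hintikka

theorem kEquiv_iff_efType_eq {k : ℕ} {p q : FinPerm} :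
    kEquiv k p q ↔ efType p.2 k ![] = efType q.2 k ![] := by
  simp only [kEquiv, sat_iff_holds]
  refine ⟨fun h => ?_, fun h ψ hψ => holds_iff_of_efType_eq ψ hψ h⟩
  exact (holds_hintikka k).1 ((h _ (qd_hintikka k _)).1 ((holds_hintikka k).2 rfl))

instance (k : ℕ) : Finite (QT k) := by
  refine Finite.of_injective (Quotient.lift (fun p : FinPerm => efType p.2 k ![])
    fun _ _ => kEquiv_iff_efType_eq.1) ?_
  intro t₁ t₂
  induction t₁ using Quotient.ind
  induction t₂ using Quotient.ind
  exact fun h => Quotient.sound (kEquiv_iff_efType_eq.2 h)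

instance (k : ℕ) : Finite (Tk k) := inferInstanceAs (Finite {t : QT k // Realized k t})

section BlockSum

variable {a b : ℕ}

theorem castAdd_lt_natAdd (x : Fin a) (y : Fin b) : Fin.castAdd b x < Fin.natAdd a y := by
  simp [Fin.lt_def]; omega

theorem natAdd_not_lt_castAdd (x : Fin a) (y : Fin b) : ¬ Fin.natAdd a y < Fin.castAdd b x :=
  (castAdd_lt_natAdd x y).asymm

structure IsBlockSum (up : Bool) (σ : Equiv.Perm (Fin a)) (τ : Equiv.Perm (Fin b))
    (ρ : Equiv.Perm (Fin (a + b))) : Prop where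
  left : ∀ x x', ρ (Fin.castAdd b x) < ρ (Fin.castAdd b x') ↔ σ x < σ x'
  right : ∀ y y', ρ (Fin.natAdd a y) < ρ (Fin.natAdd a y') ↔ τ y < τ y'
  cross : ∀ x y, ρ (Fin.castAdd b x) < ρ (Fin.natAdd a y) ↔ up

theorem isBlockSum_dsum (σ : Equiv.Perm (Fin a)) (τ : Equiv.Perm (Fin b)) :
    IsBlockSum true σ τ (dsum σ τ) where
  left x x' := by simp [dsum, Equiv.permCongr_apply, (Fin.strictMono_castAdd _).lt_iff_lt]
  right y y' := by simp [dsum, Equiv.permCongr_apply]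
  cross x y := by simpa [dsum, Equiv.permCongr_apply] using castAdd_lt_natAdd (σ x) (τ y)

theorem isBlockSum_ssum (σ : Equiv.Perm (Fin a)) (τ : Equiv.Perm (Fin b)) :
    IsBlockSum false σ τ (ssum σ τ) where
  left x x' := by simp [ssum]
  right y y' := by simp [ssum, (Fin.strictMono_castAdd _).lt_iff_lt]
  cross x y := by simp [ssum, Fin.le_def]; omega

variable {up : Bool} {σ : Equiv.Perm (Fin a)} {τ : Equiv.Perm (Fin b)}
  {ρ : Equiv.Perm (Fin (a + b))}

theorem IsBlockSum.cross_symm (h : IsBlockSum up σ τ ρ) (x : Fin a) (y : Fin b) :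
    ρ (Fin.natAdd a y) < ρ (Fin.castAdd b x) ↔ ¬ up := by
  have hne : ρ (Fin.natAdd a y) ≠ ρ (Fin.castAdd b x) := by simp [Fin.ext_iff]; omega
  rw [← h.cross x y, not_lt, hne.le_iff_lt]

theorem IsBlockSum.avoids_of_avoids (h : IsBlockSum true σ τ ρ) (hσ : Avoids σ)
    (hτ : Avoids τ) : Avoids ρ := by
  rintro ⟨i, j, k, hij, hjk, hki, hij'⟩
  induction i using Fin.addCases <;> induction j using Fin.addCases <;>
    induction k using Fin.addCases <;>
    simp only [(Fin.strictMono_castAdd _).lt_iff_lt, (Fin.strictMono_natAdd _).lt_iff_lt,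
      castAdd_lt_natAdd, natAdd_not_lt_castAdd, h.left, h.right, h.cross, h.cross_symm,
      not_true_eq_false] at *
  exacts [hσ ⟨_, _, _, hij, hjk, hki, hij'⟩, hτ ⟨_, _, _, hij, hjk, hki, hij'⟩]

theorem IsBlockSum.avoids_of_avoids_right {σ : Equiv.Perm (Fin 1)}
    {ρ : Equiv.Perm (Fin (1 + b))} (h : IsBlockSum false σ τ ρ) (hτ : Avoids τ) :
    Avoids ρ := by
  rintro ⟨i, j, k, hij, hjk, hki, hij'⟩
  induction i using Fin.addCases <;> induction j using Fin.addCases <;>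
    induction k using Fin.addCases <;>
    simp only [(Fin.strictMono_castAdd _).lt_iff_lt, (Fin.strictMono_natAdd _).lt_iff_lt,
      castAdd_lt_natAdd, natAdd_not_lt_castAdd, h.right, h.cross, Bool.false_eq_true,
      Fin.fin_one_eq_zero, lt_self_iff_false] at *
  exact hτ ⟨_, _, _, hij, hjk, hki, hij'⟩

theorem IsBlockSum.pairType_castAdd (h : IsBlockSum up σ τ ρ) (x x' : Fin a) :
    pairType ρ (Fin.castAdd b x) (Fin.castAdd b x') = pairType σ x x' := by
  simp [pairType, h.left, (Fin.strictMono_castAdd _).lt_iff_lt]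

theorem IsBlockSum.pairType_natAdd (h : IsBlockSum up σ τ ρ) (y y' : Fin b) :
    pairType ρ (Fin.natAdd a y) (Fin.natAdd a y') = pairType τ y y' := by
  simp [pairType, h.right]

theorem IsBlockSum.pairType_castAdd_natAdd (h : IsBlockSum up σ τ ρ) (x : Fin a) (y : Fin b) :
    pairType ρ (Fin.castAdd b x) (Fin.natAdd a y) = (true, up, false) := by
  simp [pairType, h.cross, castAdd_lt_natAdd, (castAdd_lt_natAdd x y).ne]

theorem IsBlockSum.pairType_natAdd_castAdd (h : IsBlockSum up σ τ ρ) (x : Fin a) (y : Fin b) :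
    pairType ρ (Fin.natAdd a y) (Fin.castAdd b x) = (false, !up, false) := by
  simp [pairType, h.cross_symm, natAdd_not_lt_castAdd, (castAdd_lt_natAdd x y).ne']

def blockJoin {lp lq : ℕ} (ap : Fin lp → Fin a) (aq : Fin lq → Fin b) :
    Fin lp ⊕ Fin lq → Fin (a + b) :=
  Sum.elim (Fin.castAdd b ∘ ap) (Fin.natAdd a ∘ aq)

variable {l lp lq : ℕ} {s : Fin l → Fin lp ⊕ Fin lq}

theorem snoc_blockJoin_castAdd (ap : Fin lp → Fin a) (aq : Fin lq → Fin b) (x : Fin a) :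
    Fin.snoc (blockJoin ap aq ∘ s) (Fin.castAdd b x) =
      blockJoin (Fin.snoc ap x) aq ∘
        Fin.snoc (Sum.map Fin.castSucc id ∘ s) (.inl (Fin.last lp)) := by
  funext i
  induction i using Fin.lastCases with
  | last => simp [blockJoin]
  | cast i => rcases h : s i <;> simp [blockJoin, h]

theorem snoc_blockJoin_natAdd (ap : Fin lp → Fin a) (aq : Fin lq → Fin b) (y : Fin b) :
    Fin.snoc (blockJoin ap aq ∘ s) (Fin.natAdd a y) =
      blockJoin ap (Fin.snoc aq y) ∘
        Fin.snoc (Sum.map id Fin.castSucc ∘ s) (.inr (Fin.last lq)) := by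
  funext i
  induction i using Fin.lastCases with
  | last => simp [blockJoin]
  | cast i => rcases h : s i <;> simp [blockJoin, h]

variable {a' b' : ℕ} {σ' : Equiv.Perm (Fin a')} {τ' : Equiv.Perm (Fin b')}
  {ρ' : Equiv.Perm (Fin (a' + b'))}

theorem IsBlockSum.atomicType_blockJoin (h : IsBlockSum up σ τ ρ) (h' : IsBlockSum up σ' τ' ρ')
    {ap : Fin lp → Fin a} {ap' : Fin lp → Fin a'} {aq : Fin lq → Fin b} {aq' : Fin lq → Fin b'}
    (hp : atomicType σ ap = atomicType σ' ap') (hq : atomicType τ aq = atomicType τ' aq') :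
    atomicType ρ (blockJoin ap aq ∘ s) = atomicType ρ' (blockJoin ap' aq' ∘ s) := by
  funext i j
  simp only [atomicType, Function.comp_apply]
  rcases s i with x | y <;> rcases s j with x' | y' <;>
    simp only [blockJoin, Sum.elim_inl, Sum.elim_inr, Function.comp_apply, h.pairType_castAdd,
      h'.pairType_castAdd, h.pairType_natAdd, h'.pairType_natAdd, h.pairType_castAdd_natAdd,
      h'.pairType_castAdd_natAdd, h.pairType_natAdd_castAdd, h'.pairType_natAdd_castAdd]
  exacts [congrFun₂ hp x x', congrFun₂ hq y y']

theorem IsBlockSum.efType_blockJoin (h : IsBlockSum up σ τ ρ) (h' : IsBlockSum up σ' τ' ρ') :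
    ∀ (k : ℕ) {l lp lq : ℕ} (s : Fin l → Fin lp ⊕ Fin lq) {ap : Fin lp → Fin a}
      {ap' : Fin lp → Fin a'} {aq : Fin lq → Fin b} {aq' : Fin lq → Fin b'},
      efType σ k ap = efType σ' k ap' → efType τ k aq = efType τ' k aq' →
      efType ρ k (blockJoin ap aq ∘ s) = efType ρ' k (blockJoin ap' aq' ∘ s)
  | 0, _, _, _, _, _, _, _, _, hp, hq => h.atomicType_blockJoin h' hp hq
  | k + 1, _, _, _, s, _, _, _, _, hp, hq => by
    obtain ⟨hp₀, hp_forth, hp_back⟩ := efType_succ_eq_iff.1 hp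
    obtain ⟨hq₀, hq_forth, hq_back⟩ := efType_succ_eq_iff.1 hq
    refine efType_succ_eq_iff.2 ⟨h.atomicType_blockJoin h' hp₀ hq₀, fun c => ?_, fun d => ?_⟩
    · induction c using Fin.addCases with
      | left x =>
        obtain ⟨x', hx⟩ := hp_forth x
        refine ⟨Fin.castAdd b' x', ?_⟩
        rw [snoc_blockJoin_castAdd, snoc_blockJoin_castAdd]
        exact h.efType_blockJoin h' k _ hx (efType_eq_of_succ_eq hq)
      | right y =>
        obtain ⟨y', hy⟩ := hq_forth y
        refine ⟨Fin.natAdd a' y', ?_⟩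
        rw [snoc_blockJoin_natAdd, snoc_blockJoin_natAdd]
        exact h.efType_blockJoin h' k _ (efType_eq_of_succ_eq hp) hy
    · induction d using Fin.addCases with
      | left x' =>
        obtain ⟨x, hx⟩ := hp_back x'
        refine ⟨Fin.castAdd b x, ?_⟩
        rw [snoc_blockJoin_castAdd, snoc_blockJoin_castAdd]
        exact h.efType_blockJoin h' k _ hx (efType_eq_of_succ_eq hq)
      | right y' =>
        obtain ⟨y, hy⟩ := hq_back y'
        refine ⟨Fin.natAdd a y, ?_⟩
        rw [snoc_blockJoin_natAdd, snoc_blockJoin_natAdd]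
        exact h.efType_blockJoin h' k _ (efType_eq_of_succ_eq hp) hy

theorem IsBlockSum.kEquiv (h : IsBlockSum up σ τ ρ) (h' : IsBlockSum up σ' τ' ρ') {k : ℕ}
    (hσ : kEquiv k ⟨a, σ⟩ ⟨a', σ'⟩) (hτ : kEquiv k ⟨b, τ⟩ ⟨b', τ'⟩) :
    kEquiv k ⟨a + b, ρ⟩ ⟨a' + b', ρ'⟩ := by
  rw [kEquiv_iff_efType_eq] at *
  convert h.efType_blockJoin h' k ![] hσ hτ

end BlockSum

theorem avoids_glue {p q : FinPerm} (hp : AvoidsF p) (hq : AvoidsF q) : AvoidsF (glue p q) :=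
  (isBlockSum_dsum _ _).avoids_of_avoids hp ((isBlockSum_ssum _ _).avoids_of_avoids_right hq)

theorem kEquiv_glue {k : ℕ} {p p' q q' : FinPerm} (hp : kEquiv k p p') (hq : kEquiv k q q') :
    kEquiv k (glue p q) (glue p' q') :=
  (isBlockSum_dsum _ _).kEquiv (isBlockSum_dsum _ _) hp
    ((isBlockSum_ssum _ _).kEquiv (isBlockSum_ssum _ _) (fun _ _ => Iff.rfl) hq)

theorem hfun_typeOf (k : ℕ) (p q : FinPerm) :
    Hfun k (typeOf k p) (typeOf k q) = typeOf k (glue p q) :=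
  Quotient.sound (kEquiv_glue (Quotient.mk_out (s := kSetoid k) p)
    (Quotient.mk_out (s := kSetoid k) q))

theorem Realized.hfun {k : ℕ} {u₁ u₂ : QT k} (h₁ : Realized k u₁) (h₂ : Realized k u₂) :
    Realized k (Hfun k u₁ u₂) := by
  obtain ⟨p, hp, rfl⟩ := h₁
  obtain ⟨q, hq, rfl⟩ := h₂
  exact ⟨glue p q, avoids_glue hp hq, (hfun_typeOf k p q).symm⟩

theorem isTermSCC_iff {k : ℕ} {S : Set (Tk k)} :
    IsTermSCC k S ↔ Relation.IsTerminalComponent (EdgeT k) S :=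
  ⟨fun ⟨h₁, h₂, h₃⟩ => ⟨h₁, h₂, h₃⟩, fun ⟨h₁, h₂, h₃⟩ => ⟨h₁, h₂, h₃⟩⟩

theorem dependency_graph_unique_terminal_scc_general (k : ℕ) :
    (∀ u₁ u₂ : QT k, Realized k u₁ → Realized k u₂ →
      Realized k (Hfun k u₁ u₂) ∧ Edge k u₁ (Hfun k u₁ u₂) ∧ Edge k u₂ (Hfun k u₁ u₂)) ∧
    (∃! S : Set (Tk k), IsTermSCC k S) := by
  have common : ∀ u₁ u₂ : QT k, Realized k u₁ → Realized k u₂ →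
      Realized k (Hfun k u₁ u₂) ∧ Edge k u₁ (Hfun k u₁ u₂) ∧ Edge k u₂ (Hfun k u₁ u₂) :=
    fun u₁ u₂ h₁ h₂ => ⟨h₁.hfun h₂, ⟨u₂, h₂, .inl rfl⟩, ⟨u₁, h₁, .inr rfl⟩⟩
  refine ⟨common, ?_⟩
  have : Nonempty (Tk k) := ⟨⟨emptyType k, ⟨0, 1⟩, fun ⟨i, _⟩ => i.elim0, rfl⟩⟩
  simpa only [isTermSCC_iff] using
    Relation.existsUnique_isTerminalComponent_of_common_successor fun u v =>
      ⟨⟨_, (common u.1 v.1 u.2 v.2).1⟩, (common u.1 v.1 u.2 v.2).2⟩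

/-- In the dependency graph `G_k`, any two vertices `u₁, u₂` have a common out-neighbour,
namely `H_k(u₁,u₂)`; consequently `G_k` has a unique terminal strongly connected component. -/
theorem dependency_graph_unique_terminal_scc (k : ℕ) (hk : 2 ≤ k) :
    (∀ u₁ u₂ : QT k, Realized k u₁ → Realized k u₂ →
      Realized k (Hfun k u₁ u₂) ∧ Edge k u₁ (Hfun k u₁ u₂) ∧ Edge k u₂ (Hfun k u₁ u₂)) ∧
    (∃! S : Set (Tk k), IsTermSCC k S) :=
  dependency_graph_unique_terminal_scc_general k

end Av231
end

section
/- (Kakeya) Let (p_i)_{i ≥ 0} be a non-increasing sequence of positive real numbers with Σ_{i≥0} p_i < +∞. Assume that for all i ≥ 0 one has p_i ≤ Σ_{j > i} p_j. Then the set of subsums { Σ_{i≥0} ε_i p_i : (ε_i) ∈ {0,1}^ℕ } equals the full interval [0, Σ_{i≥0} p_i]. -/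
/-!
Choose the `ε_n` greedily: take `p_n` whenever it fits into what is left of `x`. The remainder
`r_n` then stays in `[0, Σ_{k ≥ n} p_k]`: taking `p_n` lowers both bounds by `p_n`, and `p_n` is
skipped only when `r_n < p_n ≤ Σ_{k > n} p_k`. As the tails tend to `0`, so does `r_n`, and the
chosen terms sum to `x`.
-/

open Filter Topology Finset

theorem tsum_subtype_lt_eq_tsum_nat_add {α : Type*} [AddCommMonoid α] [TopologicalSpace α]
    (f : ℕ → α) (n : ℕ) : ∑' j : {j : ℕ // n < j}, f j = ∑' k, f (k + (n + 1)) :=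
  (Function.Injective.tsum_eq (g := fun k : ℕ => (⟨k + (n + 1), by omega⟩ : {j // n < j}))
    (fun a b h => by simpa using h)
    (fun j _ => ⟨j.1 - (n + 1), Subtype.ext (by have := j.2; dsimp; omega)⟩)).symm

theorem tsum_ite_mem_Icc {ι : Type*} {p : ι → ℝ} (hp : ∀ i, 0 ≤ p i) (hsum : Summable p)
    (ε : ι → Bool) : (∑' i, if ε i then p i else 0) ∈ Set.Icc 0 (∑' i, p i) := by
  have hle : ∀ i, (if ε i then p i else 0) ≤ p i := fun i => by split <;> simp [hp i]
  have hnn : ∀ i, 0 ≤ (if ε i then p i else 0) := fun i => by split <;> simp [hp i]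
  exact ⟨tsum_nonneg hnn, (hsum.of_nonneg_of_le hnn hle).tsum_le_tsum hle hsum⟩

theorem Summable.tsum_nat_add_eq_add {G : Type*} [AddCommGroup G] [TopologicalSpace G]
    [IsTopologicalAddGroup G] [T2Space G] {p : ℕ → G} (hsum : Summable p) (n : ℕ) :
    ∑' k, p (k + n) = p n + ∑' k, p (k + (n + 1)) := by
  rw [((summable_nat_add_iff n).mpr hsum).tsum_eq_zero_add]
  simp only [zero_add, add_right_comm _ 1 n, add_assoc]

section Greedy

variable (p : ℕ → ℝ) (x : ℝ)

noncomputable def greedyRemainder : ℕ → ℝ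
  | 0 => x
  | n + 1 => if p n ≤ greedyRemainder n then greedyRemainder n - p n else greedyRemainder n

noncomputable def greedyChoice (n : ℕ) : Bool := decide (p n ≤ greedyRemainder p x n)

theorem sum_range_greedyChoice (n : ℕ) :
    ∑ i ∈ range n, (if greedyChoice p x i then p i else 0) = x - greedyRemainder p x n := by
  induction n with
  | zero => simp [greedyRemainder]
  | succ n ih =>
    rw [sum_range_succ, ih, greedyRemainder, greedyChoice]
    simp only [decide_eq_true_eq]
    split_ifs <;> ring

variable {p x}

theorem greedyRemainder_mem_Icc (hsum : Summable p) (hcond : ∀ n, p n ≤ ∑' k, p (k + (n + 1)))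
    (hx : x ∈ Set.Icc 0 (∑' i, p i)) (n : ℕ) :
    greedyRemainder p x n ∈ Set.Icc 0 (∑' k, p (k + n)) := by
  induction n with
  | zero => simpa [greedyRemainder] using hx
  | succ n ih =>
    have hsplit := hsum.tsum_nat_add_eq_add n
    rw [greedyRemainder]
    split_ifs with h
    · constructor <;> linarith [ih.2]
    · exact ⟨ih.1, by linarith [hcond n]⟩

theorem tendsto_greedyRemainder (hsum : Summable p) (hcond : ∀ n, p n ≤ ∑' k, p (k + (n + 1)))
    (hx : x ∈ Set.Icc 0 (∑' i, p i)) : Tendsto (greedyRemainder p x) atTop (𝓝 0) :=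
  squeeze_zero (fun n => (greedyRemainder_mem_Icc hsum hcond hx n).1)
    (fun n => (greedyRemainder_mem_Icc hsum hcond hx n).2) (tendsto_sum_nat_add p)

theorem hasSum_greedyChoice (hp : ∀ i, 0 ≤ p i) (hsum : Summable p)
    (hcond : ∀ n, p n ≤ ∑' k, p (k + (n + 1))) (hx : x ∈ Set.Icc 0 (∑' i, p i)) :
    HasSum (fun i => if greedyChoice p x i then p i else 0) x := by
  rw [hasSum_iff_tendsto_nat_of_nonneg (fun i => by split <;> simp [hp i])]
  simp only [sum_range_greedyChoice]
  simpa using (tendsto_greedyRemainder hsum hcond hx).const_sub x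

end Greedy

theorem kakeya_subsums_general (p : ℕ → ℝ) (hpos : ∀ i, 0 < p i)
    (hsum : Summable p) (hcond : ∀ i : ℕ, p i ≤ ∑' j : {j : ℕ // i < j}, p j.1) :
    {x : ℝ | ∃ ε : ℕ → Bool, x = ∑' i : ℕ, if ε i then p i else 0} =
      Set.Icc 0 (∑' i : ℕ, p i) := by
  have hp : ∀ i, 0 ≤ p i := fun i => (hpos i).le
  simp only [tsum_subtype_lt_eq_tsum_nat_add] at hcond
  ext x
  constructor
  · rintro ⟨ε, rfl⟩
    exact tsum_ite_mem_Icc hp hsum ε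
  · intro hx
    exact ⟨greedyChoice p x, (hasSum_greedyChoice hp hsum hcond hx).tsum_eq.symm⟩

/-- Kakeya's lemma: if `(p_i)` is a non-increasing sequence of positive reals with
`Σ p_i < ∞` and `p_i ≤ Σ_{j>i} p_j` for all `i`, then the set of subsums of `Σ p_i`
is the whole interval `[0, Σ p_i]`. -/
theorem kakeya_subsums (p : ℕ → ℝ) (hpos : ∀ i, 0 < p i) (hanti : Antitone p)
    (hsum : Summable p) (hcond : ∀ i : ℕ, p i ≤ ∑' j : {j : ℕ // i < j}, p j.1) :
    {x : ℝ | ∃ ε : ℕ → Bool, x = ∑' i : ℕ, if ε i then p i else 0} =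
      Set.Icc 0 (∑' i : ℕ, p i) :=
  kakeya_subsums_general p hpos hsum hcond
end

section
/- Let L' = { Σ_{k=0}^{K} a_k · 4^{-k-1} : K ≥ 0 and a_k integers with 0 ≤ a_k ≤ 2·Cat_k }, where Cat_k is the k-th Catalan number. Then the topological closure of L' in ℝ equals the interval [0,1]. In particular, Σ_{k=0}^{∞} 2·Cat_k·4^{-k-1} = 1. -/
/-!
With `r n = C(2n, n) / 4 ^ n`, the identity `C(2n+2, n+1) = 4 C(2n, n) - 2 Cat n` reads
`2 Cat n * 4 ^ (-n-1) = r n - r (n+1)`: the partial sums of the series telescope to `1 - r n`,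
and `r n ^ 2 ≤ 1 / (2n+1)` forces `r n → 0`. So `r n` is the total weight of the digits from
position `n` on, and since a single unit `4 ^ (-n-1)` at position `n` is at most `r (n+1)`, the
greedy expansion of any `y ∈ [0, 1]` leaves a remainder in `[0, r n]` after `n` digits.
-/

open Finset Filter Topology

theorem Nat.centralBinom_succ_add_two_mul_catalan (n : ℕ) :
    (n + 1).centralBinom + 2 * catalan n = 4 * n.centralBinom := by
  have h1 := Nat.succ_mul_centralBinom_succ n
  have h2 := succ_mul_catalan_eq_centralBinom n
  refine Nat.eq_of_mul_eq_mul_left (by omega : 0 < n + 1) ?_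
  linear_combination h1 + 2 * h2

theorem Nat.centralBinom_sq_mul_le (n : ℕ) : n.centralBinom ^ 2 * (2 * n + 1) ≤ 16 ^ n := by
  induction n with
  | zero => simp
  | succ n ih =>
    have h := Nat.succ_mul_centralBinom_succ n
    have key : (2 * n + 1) * (2 * n + 3) ≤ 4 * (n + 1) ^ 2 := by ring_nf; omega
    refine Nat.le_of_mul_le_mul_left ?_ (by positivity : 0 < (n + 1) ^ 2)
    calc (n + 1) ^ 2 * ((n + 1).centralBinom ^ 2 * (2 * (n + 1) + 1))
        = ((n + 1) * (n + 1).centralBinom) ^ 2 * (2 * n + 3) := by ring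
      _ = 4 * (2 * n + 1) * n.centralBinom ^ 2 * ((2 * n + 1) * (2 * n + 3)) := by rw [h]; ring
      _ ≤ 4 * (2 * n + 1) * n.centralBinom ^ 2 * (4 * (n + 1) ^ 2) := by gcongr
      _ = (n + 1) ^ 2 * 16 * (n.centralBinom ^ 2 * (2 * n + 1)) := by ring
      _ ≤ (n + 1) ^ 2 * 16 * 16 ^ n := by gcongr
      _ = (n + 1) ^ 2 * 16 ^ (n + 1) := by ring

theorem zpow_neg_natCast_sub_one {K : Type*} [DivisionRing K] (x : K) (k : ℕ) :
    x ^ (-(k : ℤ) - 1) = (x ^ (k + 1))⁻¹ := by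
  rw [← zpow_natCast, ← zpow_neg]; push_cast; ring_nf

theorem exists_le_sub_mul_mem_Icc {w t R : ℝ} {c : ℕ} (hw : 0 < w) (ht : 0 ≤ t)
    (htc : t ≤ c * w + R) (hwR : w ≤ R) : ∃ d ≤ c, t - d * w ∈ Set.Icc 0 R := by
  by_cases hct : c * w ≤ t
  · exact ⟨c, le_rfl, by linarith, by linarith⟩
  have htw : 0 ≤ t / w := div_nonneg ht hw.le
  refine ⟨⌊t / w⌋₊, ?_, ?_, ?_⟩
  · refine ((Nat.floor_lt htw).2 ?_).le
    rw [div_lt_iff₀ hw]; linarith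
  · have := Nat.floor_le htw
    rw [le_div_iff₀ hw] at this; linarith
  · have := Nat.lt_floor_add_one (t / w)
    rw [div_lt_iff₀ hw] at this; linarith

theorem exists_digits_sub_sum_mem_Icc {w r : ℕ → ℝ} {c : ℕ → ℕ} (hw : ∀ n, 0 < w n)
    (hr : ∀ n, r n = c n * w n + r (n + 1)) (hwr : ∀ n, w n ≤ r (n + 1)) {y : ℝ}
    (hy : y ∈ Set.Icc 0 (r 0)) (n : ℕ) :
    ∃ a : ℕ → ℕ, (∀ k, a k ≤ c k) ∧ y - ∑ k ∈ range n, a k * w k ∈ Set.Icc 0 (r n) := by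
  induction n with
  | zero => exact ⟨0, fun _ ↦ Nat.zero_le _, by simpa using hy⟩
  | succ n ih =>
    obtain ⟨a, hac, hlo, hhi⟩ := ih
    obtain ⟨d, hdc, hd⟩ :=
      exists_le_sub_mul_mem_Icc (hw n) hlo (hhi.trans (hr n).le) (hwr n)
    refine ⟨Function.update a n d, fun k ↦ ?_, ?_⟩
    · rcases eq_or_ne k n with rfl | hk
      · simpa using hdc
      · simpa [hk] using hac k
    · have hsum : ∑ k ∈ range n, (Function.update a n d k : ℝ) * w k =
          ∑ k ∈ range n, (a k : ℝ) * w k :=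
        sum_congr rfl fun k hk ↦ by rw [Function.update_of_ne (mem_range.1 hk).ne]
      rw [sum_range_succ, hsum, Function.update_self, ← sub_sub]
      exact hd

noncomputable def centralBinomRatio (n : ℕ) : ℝ := n.centralBinom / 4 ^ n

@[simp]
theorem centralBinomRatio_zero : centralBinomRatio 0 = 1 := by simp [centralBinomRatio]

theorem centralBinomRatio_nonneg (n : ℕ) : 0 ≤ centralBinomRatio n := by
  unfold centralBinomRatio; positivity

theorem centralBinomRatio_sub_succ (n : ℕ) :
    centralBinomRatio n - centralBinomRatio (n + 1) =
      2 * catalan n * (4 : ℝ) ^ (-(n : ℤ) - 1) := by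
  have h : ((n + 1).centralBinom : ℝ) = 4 * n.centralBinom - 2 * catalan n := by
    rw [eq_sub_iff_add_eq]; exact_mod_cast Nat.centralBinom_succ_add_two_mul_catalan n
  rw [centralBinomRatio, centralBinomRatio, h, zpow_neg_natCast_sub_one, pow_succ]
  field_simp
  ring

theorem zpow_neg_sub_one_le_centralBinomRatio_succ (n : ℕ) :
    (4 : ℝ) ^ (-(n : ℤ) - 1) ≤ centralBinomRatio (n + 1) := by
  rw [zpow_neg_natCast_sub_one, centralBinomRatio, ← one_div]
  gcongr
  exact_mod_cast Nat.centralBinom_pos _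

theorem centralBinomRatio_sq_le (n : ℕ) : centralBinomRatio n ^ 2 ≤ 1 / (2 * n + 1) := by
  rw [centralBinomRatio, div_pow, ← pow_mul, mul_comm, pow_mul, le_div_iff₀ (by positivity),
    div_mul_eq_mul_div, div_le_one (by positivity)]
  exact_mod_cast Nat.centralBinom_sq_mul_le n

theorem tendsto_centralBinomRatio : Tendsto centralBinomRatio atTop (𝓝 0) := by
  have hsq : Tendsto (fun n ↦ centralBinomRatio n ^ 2) atTop (𝓝 0) := by
    refine squeeze_zero (fun n ↦ sq_nonneg _) centralBinomRatio_sq_le ?_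
    refine tendsto_const_nhds.div_atTop (tendsto_atTop_add_const_right _ _ ?_)
    exact tendsto_natCast_atTop_atTop.const_mul_atTop two_pos
  simpa [Real.sqrt_sq (centralBinomRatio_nonneg _)] using hsq.sqrt

theorem sum_range_two_mul_catalan (n : ℕ) :
    ∑ k ∈ range n, 2 * (catalan k : ℝ) * (4 : ℝ) ^ (-(k : ℤ) - 1) = 1 - centralBinomRatio n := by
  simp only [← centralBinomRatio_sub_succ]
  rw [sum_range_sub', centralBinomRatio_zero]

theorem hasSum_two_mul_catalan :
    HasSum (fun k : ℕ ↦ 2 * (catalan k : ℝ) * (4 : ℝ) ^ (-(k : ℤ) - 1)) 1 := by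
  rw [hasSum_iff_tendsto_nat_of_nonneg (fun k ↦ by positivity)]
  simpa [sum_range_two_mul_catalan] using tendsto_centralBinomRatio.const_sub 1

theorem sum_range_catalan_digits_le_one {a : ℕ → ℕ} {K : ℕ}
    (ha : ∀ k, k ≤ K → a k ≤ 2 * catalan k) :
    ∑ k ∈ range (K + 1), (a k : ℝ) * (4 : ℝ) ^ (-(k : ℤ) - 1) ≤ 1 :=
  calc ∑ k ∈ range (K + 1), (a k : ℝ) * (4 : ℝ) ^ (-(k : ℤ) - 1)
      ≤ ∑ k ∈ range (K + 1), 2 * (catalan k : ℝ) * (4 : ℝ) ^ (-(k : ℤ) - 1) := by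
        gcongr with k hk
        exact_mod_cast ha k (Nat.lt_succ_iff.1 (mem_range.1 hk))
    _ = 1 - centralBinomRatio (K + 1) := sum_range_two_mul_catalan _
    _ ≤ 1 := sub_le_self _ (centralBinomRatio_nonneg _)

theorem exists_catalan_digits {y : ℝ} (hy : y ∈ Set.Icc 0 1) (n : ℕ) :
    ∃ a : ℕ → ℕ, (∀ k, a k ≤ 2 * catalan k) ∧
      y - ∑ k ∈ range n, (a k : ℝ) * (4 : ℝ) ^ (-(k : ℤ) - 1) ∈
        Set.Icc 0 (centralBinomRatio n) := by
  have hr (n : ℕ) : centralBinomRatio n =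
      ((2 * catalan n : ℕ) : ℝ) * (4 : ℝ) ^ (-(n : ℤ) - 1) + centralBinomRatio (n + 1) := by
    push_cast; linarith [centralBinomRatio_sub_succ n]
  exact exists_digits_sub_sum_mem_Icc (fun k ↦ by positivity) hr
    zpow_neg_sub_one_le_centralBinomRatio_succ (by simpa using hy) n

/-- The set `L' = { Σ_{k=0}^K a_k 4^{-k-1} : K ≥ 0, 0 ≤ a_k ≤ 2·Cat_k }` of finite subsums
has closure the full interval `[0,1]`; in particular `Σ_{k≥0} 2·Cat_k·4^{-k-1} = 1`. -/
theorem closure_of_finite_subsums_eq_Icc :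
    closure {x : ℝ | ∃ K : ℕ, ∃ a : ℕ → ℕ, (∀ k, k ≤ K → a k ≤ 2 * catalan k) ∧
        x = ∑ k ∈ Finset.range (K + 1), (a k : ℝ) * (4 : ℝ) ^ (-(k : ℤ) - 1)} =
      Set.Icc (0 : ℝ) 1 ∧
    HasSum (fun k : ℕ => 2 * (catalan k : ℝ) * (4 : ℝ) ^ (-(k : ℤ) - 1)) 1 := by
  refine ⟨subset_antisymm ?_ ?_, hasSum_two_mul_catalan⟩
  · refine closure_minimal ?_ isClosed_Icc
    rintro x ⟨K, a, ha, rfl⟩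
    exact ⟨by positivity, sum_range_catalan_digits_le_one ha⟩
  · intro y hy
    rw [Metric.mem_closure_iff]
    intro ε hε
    obtain ⟨N, hN⟩ := eventually_atTop.1 (tendsto_centralBinomRatio.eventually (gt_mem_nhds hε))
    obtain ⟨a, ha, hlo, hhi⟩ := exists_catalan_digits hy (N + 1)
    refine ⟨_, ⟨N, a, fun k _ ↦ ha k, rfl⟩, ?_⟩
    rw [Real.dist_eq, abs_of_nonneg hlo]
    exact hhi.trans_lt (hN _ N.le_succ)
end
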